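/- The mixed polynomial f(z₁, z₂, z̄₁, z̄₂) = z̄₂⁴ + z₁z₂² + z₁²z̄₁ is strongly non-degenerate: each of the five face functions f_A = z̄₂⁴, f_B = z₁z₂², f_C = z₁²z̄₁, f_{AB} = z̄₂⁴ + z₁z₂², f_{BC} = z₁z₂² + z₁²z̄₁ (corresponding to the vertices A=(0,4), B=(1,2), C=(3,0) and the two segments of the Newton boundary) has no critical point on (ℂ*)², i.e., there is no point (z₁, z₂) with z₁z₂ ≠ 0 and no λ with |λ|=1 such that conj(∂f_Δ) = λ ∂̄f_Δ at that point. -/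

import Mathlib

open Complex ComplexConjugate

/-!
Since `|λ| = 1`, at a mixed critical point the holomorphic and antiholomorphic Wirtinger
gradients have componentwise equal moduli. The Wirtinger gradients of the face functions follow
from the sum, product and power rules, and on `(ℂ*)²` each face has a component where the moduli
differ: for instance `∂f_C/∂z₁ = 2|z₁|²` while `∂f_C/∂z̄₁ = z₁²`.
-/

/-- Wirtinger derivative `∂k/∂z₁` of a mixed function of two variables. -/
noncomputable def w1 (k : ℂ × ℂ → ℂ) (p : ℂ × ℂ) : ℂ :=
  (1 / 2 : ℂ) * (fderiv ℝ k p (1, 0) - Complex.I * fderiv ℝ k p (Complex.I, 0))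

/-- Wirtinger derivative `∂k/∂z̄₁`. -/
noncomputable def w1bar (k : ℂ × ℂ → ℂ) (p : ℂ × ℂ) : ℂ :=
  (1 / 2 : ℂ) * (fderiv ℝ k p (1, 0) + Complex.I * fderiv ℝ k p (Complex.I, 0))

/-- Wirtinger derivative `∂k/∂z₂`. -/
noncomputable def w2 (k : ℂ × ℂ → ℂ) (p : ℂ × ℂ) : ℂ :=
  (1 / 2 : ℂ) * (fderiv ℝ k p (0, 1) - Complex.I * fderiv ℝ k p (0, Complex.I))

/-- Wirtinger derivative `∂k/∂z̄₂`. -/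
noncomputable def w2bar (k : ℂ × ℂ → ℂ) (p : ℂ × ℂ) : ℂ :=
  (1 / 2 : ℂ) * (fderiv ℝ k p (0, 1) + Complex.I * fderiv ℝ k p (0, Complex.I))

/-- Mixed critical point: `conj ∂k(p) = λ ∂̄k(p)` for some `λ` with `|λ| = 1`. -/
def IsMixedCrit (k : ℂ × ℂ → ℂ) (p : ℂ × ℂ) : Prop :=
  ∃ lam : ℂ, ‖lam‖ = 1 ∧
    conj (w1 k p) = lam * w1bar k p ∧ conj (w2 k p) = lam * w2bar k p

namespace IsMixedCrit

variable {k : ℂ × ℂ → ℂ} {p : ℂ × ℂ}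

lemma norm_w1_eq (h : IsMixedCrit k p) : ‖w1 k p‖ = ‖w1bar k p‖ := by
  obtain ⟨lam, hlam, h1, -⟩ := h
  simpa [hlam] using congrArg norm h1

lemma norm_w2_eq (h : IsMixedCrit k p) : ‖w2 k p‖ = ‖w2bar k p‖ := by
  obtain ⟨lam, hlam, -, h2⟩ := h
  simpa [hlam] using congrArg norm h2

end IsMixedCrit

open ContinuousLinearMap

noncomputable def wirtingerCLM (a b : ℂ × ℂ) : ℂ × ℂ →L[ℝ] ℂ :=
  a.1 • fst ℝ ℂ ℂ + a.2 • snd ℝ ℂ ℂ + b.1 • (conjCLE.toContinuousLinearMap ∘L fst ℝ ℂ ℂ) +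
    b.2 • (conjCLE.toContinuousLinearMap ∘L snd ℝ ℂ ℂ)

@[simp]
lemma wirtingerCLM_apply (a b v : ℂ × ℂ) :
    wirtingerCLM a b v = a.1 * v.1 + a.2 * v.2 + b.1 * conj v.1 + b.2 * conj v.2 := rfl

/-- `a` and `b` are the Wirtinger gradients `(∂k/∂z₁, ∂k/∂z₂)` and `(∂k/∂z̄₁, ∂k/∂z̄₂)` at `p`:
every `ℝ`-linear map `ℂ² → ℂ` is `v ↦ a ⬝ v + b ⬝ v̄`. -/
def HasWirtingerAt (k : ℂ × ℂ → ℂ) (a b p : ℂ × ℂ) : Prop :=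
  HasFDerivAt k (wirtingerCLM a b) p

namespace HasWirtingerAt

variable {f g : ℂ × ℂ → ℂ} {a b c d p : ℂ × ℂ}

lemma fst : HasWirtingerAt (fun q => q.1) (1, 0) 0 p :=
  hasFDerivAt_fst.congr_fderiv <| by ext <;> simp

lemma snd : HasWirtingerAt (fun q => q.2) (0, 1) 0 p :=
  hasFDerivAt_snd.congr_fderiv <| by ext <;> simp

lemma conj_fst : HasWirtingerAt (fun q => conj q.1) 0 (1, 0) p :=
  (conjCLE.toContinuousLinearMap.hasFDerivAt.comp p hasFDerivAt_fst).congr_fderiv <| by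
    ext <;> simp

lemma conj_snd : HasWirtingerAt (fun q => conj q.2) 0 (0, 1) p :=
  (conjCLE.toContinuousLinearMap.hasFDerivAt.comp p hasFDerivAt_snd).congr_fderiv <| by
    ext <;> simp

lemma fun_add (hf : HasWirtingerAt f a b p) (hg : HasWirtingerAt g c d p) :
    HasWirtingerAt (fun q => f q + g q) (a + c) (b + d) p :=
  (HasFDerivAt.fun_add hf hg).congr_fderiv <| by ext <;> simp <;> ring

lemma fun_mul (hf : HasWirtingerAt f a b p) (hg : HasWirtingerAt g c d p) :
    HasWirtingerAt (fun q => f q * g q) (f p • c + g p • a) (f p • d + g p • b) p :=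
  (HasFDerivAt.fun_mul hf hg).congr_fderiv <| by ext <;> simp <;> ring

lemma fun_pow (hf : HasWirtingerAt f a b p) (n : ℕ) :
    HasWirtingerAt (fun q => f q ^ n) ((n * f p ^ (n - 1)) • a) ((n * f p ^ (n - 1)) • b) p :=
  (HasFDerivAt.pow hf n).congr_fderiv <| by ext <;> simp <;> ring

lemma w1_eq (h : HasWirtingerAt f a b p) : w1 f p = a.1 := by
  rw [w1, h.fderiv]
  simp only [wirtingerCLM_apply, map_one, map_zero, conj_I]
  linear_combination (b.1 - a.1) / 2 * I_mul_I

lemma w1bar_eq (h : HasWirtingerAt f a b p) : w1bar f p = b.1 := by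
  rw [w1bar, h.fderiv]
  simp only [wirtingerCLM_apply, map_one, map_zero, conj_I]
  linear_combination (a.1 - b.1) / 2 * I_mul_I

lemma w2_eq (h : HasWirtingerAt f a b p) : w2 f p = a.2 := by
  rw [w2, h.fderiv]
  simp only [wirtingerCLM_apply, map_one, map_zero, conj_I]
  linear_combination (b.2 - a.2) / 2 * I_mul_I

lemma w2bar_eq (h : HasWirtingerAt f a b p) : w2bar f p = b.2 := by
  rw [w2bar, h.fderiv]
  simp only [wirtingerCLM_apply, map_one, map_zero, conj_I]
  linear_combination (a.2 - b.2) / 2 * I_mul_I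

lemma not_isMixedCrit (h : HasWirtingerAt f a b p) (hne : ‖a.1‖ ≠ ‖b.1‖ ∨ ‖a.2‖ ≠ ‖b.2‖) :
    ¬ IsMixedCrit f p := fun hc => by
  rcases hne with hne | hne
  · exact hne (by simpa [h.w1_eq, h.w1bar_eq] using hc.norm_w1_eq)
  · exact hne (by simpa [h.w2_eq, h.w2bar_eq] using hc.norm_w2_eq)

end HasWirtingerAt

/-- the mixed polynomial `f = z̄₂⁴ + z₁z₂² + z₁²z̄₁` is strongly
non-degenerate: each of its five face functions has no mixed critical point on
`(ℂ*)²`. -/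
theorem example2_strongly_nondegenerate (p : ℂ × ℂ) (h1 : p.1 ≠ 0) (h2 : p.2 ≠ 0) :
    ¬ IsMixedCrit (fun q => conj q.2 ^ 4) p ∧
    ¬ IsMixedCrit (fun q => q.1 * q.2 ^ 2) p ∧
    ¬ IsMixedCrit (fun q => q.1 ^ 2 * conj q.1) p ∧
    ¬ IsMixedCrit (fun q => conj q.2 ^ 4 + q.1 * q.2 ^ 2) p ∧
    ¬ IsMixedCrit (fun q => q.1 * q.2 ^ 2 + q.1 ^ 2 * conj q.1) p := by
  have hA := HasWirtingerAt.conj_snd.fun_pow (p := p) 4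
  have hB := HasWirtingerAt.fst.fun_mul (HasWirtingerAt.snd.fun_pow (p := p) 2)
  have hC := (HasWirtingerAt.fst.fun_pow (p := p) 2).fun_mul HasWirtingerAt.conj_fst
  refine ⟨hA.not_isMixedCrit (.inr ?_), hB.not_isMixedCrit (.inl ?_),
    hC.not_isMixedCrit (.inl ?_), (hA.fun_add hB).not_isMixedCrit (.inl ?_),
    (hB.fun_add hC).not_isMixedCrit (.inr ?_)⟩ <;> simp [h1, h2]
  intro h
  nlinarith [norm_pos_iff.2 h1]
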